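/- For every integer M ≥ 1, every σ > 0 and every i ∈ Fin M, the function s ↦ g_i(σ, s) is continuous on [0, ∞). -/

import Mathlib

open MeasureTheory Real

/-- The standard complex Gaussian probability measure on ℂ:
density `w ↦ (1/π)·exp(−|w|²)` with respect to Lebesgue measure on ℂ ≅ ℝ². -/
noncomputable def gaussianC : Measure ℂ :=
  MeasureTheory.volume.withDensity
    (fun w => ENNReal.ofReal (π⁻¹ * Real.exp (-(‖w‖) ^ 2)))

/-- The expectation term
`g_i(σ, s) = ∫_ℂ log₂( Σ_j exp( −|σ·w + √s·(x i − x j)|² / σ² ) ) dγ(w)`. -/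
noncomputable def g (M : ℕ) (x : Fin M → ℂ) (σ s : ℝ) (i : Fin M) : ℝ :=
  ∫ w : ℂ,
    Real.logb 2 (∑ j : Fin M,
      Real.exp (-(‖(σ : ℂ) * w + (Real.sqrt s : ℂ) * (x i - x j)‖) ^ 2 / σ ^ 2))
    ∂gaussianC

/-- The constellation-constrained secrecy capacity
`C_σ(s) = (1/M)·Σ_i ( g_i(σ, s) − g_i(1, s) )`. -/
noncomputable def Ccc (M : ℕ) (x : Fin M → ℂ) (σ s : ℝ) : ℝ :=
  (1 / (M : ℝ)) * ∑ i : Fin M, (g M x σ s i - g M x 1 s i)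

/-!
Dominated convergence in `s`. The integrand `log₂ S(s, w)`, with `S = likelihoodSum`, is jointly
continuous, and the diagonal term `j = i` of `S` is at least `exp (-‖w‖²)` while every term is at
most `1`, so `|log₂ S(s, w)| ≤ log₂ M + ‖w‖² / log 2` uniformly in `s`; this bound has finite
Gaussian mean.
-/

section GaussianMoments

variable {V : Type*} [NormedAddCommGroup V] [InnerProductSpace ℝ V] [FiniteDimensional ℝ V]
  [MeasurableSpace V] [BorelSpace V]

lemma integrable_exp_neg_mul_sq_norm {c : ℝ} (hc : 0 < c) :
    Integrable (fun w : V => exp (-c * ‖w‖ ^ 2)) := by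
  convert (GaussianFourier.integrable_cexp_neg_mul_sq_norm_add (V := V) (b := (c : ℂ))
    (by simpa using hc) 0 0).norm using 2 with w
  simp [Complex.norm_exp, ← Complex.ofReal_pow]

lemma integrable_sq_norm_mul_exp_neg_sq_norm :
    Integrable (fun w : V => ‖w‖ ^ 2 * exp (-‖w‖ ^ 2)) := by
  refine (integrable_exp_neg_mul_sq_norm (V := V) one_half_pos).mono' (by fun_prop)
    (.of_forall fun w => ?_)
  have hle : ‖w‖ ^ 2 ≤ exp (‖w‖ ^ 2 / 2) := by
    have h := two_mul_le_exp (x := ‖w‖ ^ 2 / 2)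
    rwa [mul_div_cancel₀ _ two_ne_zero] at h
  calc ‖‖w‖ ^ 2 * exp (-‖w‖ ^ 2)‖ = ‖w‖ ^ 2 * exp (-‖w‖ ^ 2) := by
        rw [norm_of_nonneg (by positivity)]
    _ ≤ exp (‖w‖ ^ 2 / 2) * exp (-‖w‖ ^ 2) := by gcongr
    _ = exp (-(1 / 2) * ‖w‖ ^ 2) := by rw [← exp_add]; ring_nf

end GaussianMoments

lemma integrable_gaussianC_iff {f : ℂ → ℝ} :
    Integrable f gaussianC ↔ Integrable (fun w => f w * (π⁻¹ * exp (-‖w‖ ^ 2))) := by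
  rw [gaussianC,
    integrable_withDensity_iff (by fun_prop) (.of_forall fun _ => ENNReal.ofReal_lt_top)]
  congr! with w
  exact ENNReal.toReal_ofReal (by positivity)

instance : IsFiniteMeasure gaussianC :=
  isFiniteMeasure_withDensity_ofReal
    (Integrable.hasFiniteIntegral (f := fun w : ℂ => π⁻¹ * exp (-‖w‖ ^ 2))
      (by simpa using (integrable_exp_neg_mul_sq_norm (V := ℂ) one_pos).const_mul π⁻¹))

lemma integrable_sq_norm_gaussianC : Integrable (fun w : ℂ => ‖w‖ ^ 2) gaussianC :=
  integrable_gaussianC_iff.2 <| by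
    simpa only [mul_left_comm] using integrable_sq_norm_mul_exp_neg_sq_norm.const_mul π⁻¹

lemma abs_logb_le_of_exp_neg_le_of_le {b a y N : ℝ} (hb : 1 < b) (ha : 0 ≤ a) (hN : 1 ≤ N)
    (hlo : exp (-a) ≤ y) (hhi : y ≤ N) : |logb b y| ≤ logb b N + a / log b := by
  have hlo' : -(a / log b) ≤ logb b y := by
    simpa [logb, neg_div] using logb_le_logb_of_le hb (exp_pos _) hlo
  have hhi' : logb b y ≤ logb b N := logb_le_logb_of_le hb ((exp_pos _).trans_le hlo) hhi
  have hN' : 0 ≤ logb b N := logb_nonneg hb hN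
  have ha' : 0 ≤ a / log b := div_nonneg ha (log_pos hb).le
  exact abs_le.2 ⟨by linarith, by linarith⟩

section LikelihoodSum

variable (M : ℕ) (x : Fin M → ℂ) (σ : ℝ) (i : Fin M)

noncomputable def likelihoodSum (s : ℝ) (w : ℂ) : ℝ :=
  ∑ j : Fin M, exp (-(‖(σ : ℂ) * w + (√s : ℂ) * (x i - x j)‖) ^ 2 / σ ^ 2)

lemma continuous_likelihoodSum :
    Continuous fun p : ℝ × ℂ => likelihoodSum M x σ i p.1 p.2 := by
  unfold likelihoodSum
  fun_prop

lemma exp_neg_sq_norm_le_likelihoodSum (s : ℝ) (w : ℂ) :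
    exp (-‖w‖ ^ 2) ≤ likelihoodSum M x σ i s w := by
  have hdiag : σ ^ 2 * ‖w‖ ^ 2 / σ ^ 2 ≤ ‖w‖ ^ 2 := by
    rcases eq_or_ne σ 0 with rfl | hσ
    · simp
    · rw [mul_div_cancel_left₀ _ (pow_ne_zero 2 hσ)]
  unfold likelihoodSum
  refine le_trans ?_ (Finset.single_le_sum (fun j _ => (exp_pos _).le) (Finset.mem_univ i))
  rw [sub_self, mul_zero, add_zero, norm_mul, Complex.norm_real, norm_eq_abs, mul_pow, sq_abs,
    neg_div, exp_le_exp, neg_le_neg_iff]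
  exact hdiag

lemma likelihoodSum_pos (s : ℝ) (w : ℂ) : 0 < likelihoodSum M x σ i s w :=
  (exp_pos _).trans_le (exp_neg_sq_norm_le_likelihoodSum M x σ i s w)

lemma likelihoodSum_le (s : ℝ) (w : ℂ) : likelihoodSum M x σ i s w ≤ M := by
  calc likelihoodSum M x σ i s w ≤ ∑ _j : Fin M, (1 : ℝ) :=
        Finset.sum_le_sum fun j _ => exp_le_one_iff.2 <| div_nonpos_of_nonpos_of_nonneg
          (neg_nonpos.2 (by positivity)) (by positivity)
    _ = M := by simp

lemma abs_logb_likelihoodSum_le (s : ℝ) (w : ℂ) :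
    |logb 2 (likelihoodSum M x σ i s w)| ≤ logb 2 M + ‖w‖ ^ 2 / log 2 :=
  abs_logb_le_of_exp_neg_le_of_le one_lt_two (by positivity) (Nat.one_le_cast.2 i.pos)
    (exp_neg_sq_norm_le_likelihoodSum M x σ i s w) (likelihoodSum_le M x σ i s w)

lemma g_eq_integral_logb_likelihoodSum (s : ℝ) :
    g M x σ s i = ∫ w, logb 2 (likelihoodSum M x σ i s w) ∂gaussianC :=
  rfl

end LikelihoodSum

theorem g_continuousOn_general (M : ℕ) (x : Fin M → ℂ)
    (σ : ℝ) (i : Fin M) :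
    ContinuousOn (fun s => g M x σ s i) (Set.Ici (0 : ℝ)) := by
  have hF : Continuous fun p : ℝ × ℂ => logb 2 (likelihoodSum M x σ i p.1 p.2) :=
    (continuous_likelihoodSum M x σ i).logb fun p => (likelihoodSum_pos M x σ i p.1 p.2).ne'
  have hbound : Integrable (fun w : ℂ => logb 2 M + ‖w‖ ^ 2 / log 2) gaussianC :=
    (integrable_const _).add (integrable_sq_norm_gaussianC.div_const _)
  simp_rw [g_eq_integral_logb_likelihoodSum]
  exact Continuous.continuousOn <| continuous_of_dominated
    (fun s => (hF.comp₂ continuous_const continuous_id).aestronglyMeasurable)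
    (fun s => .of_forall (abs_logb_likelihoodSum_le M x σ i s)) hbound
    (.of_forall fun w => hF.comp₂ continuous_id continuous_const)

theorem g_continuousOn (M : ℕ) (hM : 1 ≤ M) (x : Fin M → ℂ)
    (σ : ℝ) (hσ : 0 < σ) (i : Fin M) :
    ContinuousOn (fun s => g M x σ s i) (Set.Ici (0 : ℝ)) :=
  g_continuousOn_general M x σ i
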